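/- (Theorem 1, equivalence of forward and incremental true online TD(λ)-Replan.) Let n ∈ ℕ, φ : ℕ → ℝ^n, α : ℕ → ℝ, R : ℕ → ℝ, γ, λ ∈ ℝ, and let θ : ℕ → ℝ^n satisfy the forward-view replay closed form: for every t ∈ ℕ, θ_{t+1} = (A_t A_{t−1} ⋯ A_0) θ_t + Σ_{k=0}^{t} (A_t ⋯ A_{k+1}) (α_k φ_k G_k^{λ|t+1}), where A_i := I − α_i φ_i φ_iᵀ and G_k^{λ|t+1} is the interim λ-return determined by θ, φ, R, γ, λ. Define sequences incrementally by e_{−1} := 0 ∈ ℝ^n, ē_{−1} := 0 ∈ ℝ^n, Ā_{−1} := I, and for t ≥ 0: e_t := γλ A_t e_{t−1} + α_t φ_t; ē_t := A_t ē_{t−1} + (δ_t + ⟨θ_t, φ_t⟩ − ⟨θ_{t−1}, φ_t⟩) e_t + α_t ⟨θ_{t−1}, φ_t⟩ φ_t with δ_t := R_{t+1} + γ ⟨θ_t, φ_{t+1}⟩ − ⟨θ_t, φ_t⟩ (and θ_{−1} := θ_0); Ā_t := A_t Ā_{t−1}. Then for every t ∈ ℕ, θ_{t+1} = Ā_t θ_t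 + ē_t. -/

import Mathlib

/-!
Both sides have the form `(A_t ⋯ A_0) θ_t + Σ_{k ≤ t} (A_t ⋯ A_{k+1}) (c_k φ_k)`, so it
suffices to show that `ē_t` is this replay sum with `c_k = α_k G_k^{λ|t+1}`. Extending the
horizon by one step adds `(γλ)^{t-k} δ'_t` to `G_k^{λ|t}`, where
`δ'_t = R_{t+1} + γ⟨θ_t, φ_{t+1}⟩ − ⟨θ_{t−1}, φ_t⟩`, and at `k = t` the definition reads
`G_t^{λ|t} = ⟨θ_{t−1}, φ_t⟩`. As `e_t` unrolls to the replay sum with `c_k = (γλ)^{t-k} α_k`,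
these replay sums obey exactly the recursion that defines `ē`.
-/

open Matrix

/-- `prodDesc n A t j = A t * A (t-1) * ⋯ * A j`, the product in decreasing index order;
it equals the identity when `j = t + 1` (empty product). -/
noncomputable def prodDesc (n : ℕ) (A : ℕ → Matrix (Fin n) (Fin n) ℝ) (t j : ℕ) :
    Matrix (Fin n) (Fin n) ℝ :=
  ((List.range (t + 1 - j)).map (fun i => A (t - i))).prod

/-- The `i`-step return from time `k`:
`G_k^{(i)} = Σ_{j=1}^{i} γ^{j−1} R_{k+j} + γ^i ⟨θ_{k+i−1}, φ_{k+i}⟩`. -/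
noncomputable def iStepReturn (n : ℕ) (θ φ : ℕ → (Fin n → ℝ)) (R : ℕ → ℝ) (γ : ℝ)
    (k i : ℕ) : ℝ :=
  (∑ j ∈ Finset.Icc 1 i, γ ^ (j - 1) * R (k + j)) + γ ^ i * (θ (k + i - 1) ⬝ᵥ φ (k + i))

/-- The interim λ-return truncated at horizon `t` (for `k < t`):
`G_k^{λ|t} = (1−λ) Σ_{i=1}^{t−k−1} λ^{i−1} G_k^{(i)} + λ^{t−k−1} G_k^{(t−k)}`. -/
noncomputable def interimLambdaReturn (n : ℕ) (θ φ : ℕ → (Fin n → ℝ)) (R : ℕ → ℝ)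
    (γ lam : ℝ) (k t : ℕ) : ℝ :=
  (1 - lam) * ∑ i ∈ Finset.Icc 1 (t - k - 1), lam ^ (i - 1) * iStepReturn n θ φ R γ k i
    + lam ^ (t - k - 1) * iStepReturn n θ φ R γ k (t - k)

variable {n : ℕ}

section prodDesc

variable (A : ℕ → Matrix (Fin n) (Fin n) ℝ)

lemma prodDesc_succ_self (t : ℕ) : prodDesc n A t (t + 1) = 1 := by
  simp [prodDesc]

lemma prodDesc_succ {t j : ℕ} (h : j ≤ t + 1) :
    prodDesc n A (t + 1) j = A (t + 1) * prodDesc n A t j := by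
  rw [prodDesc, show t + 1 + 1 - j = t + 1 - j + 1 by omega, List.range_succ_eq_map,
    List.map_cons, List.prod_cons, List.map_map]
  simp [Function.comp_def, prodDesc]

lemma eq_prodDesc_zero_of_succ (B : ℕ → Matrix (Fin n) (Fin n) ℝ) (hB0 : B 0 = 1)
    (hB : ∀ t, B (t + 1) = A t * B t) (t : ℕ) : B (t + 1) = prodDesc n A t 0 := by
  induction t with
  | zero => simp [hB, hB0, prodDesc]
  | succ t ih => rw [hB, ih, prodDesc_succ A (Nat.zero_le _)]

end prodDesc

section replaySum

variable (A : ℕ → Matrix (Fin n) (Fin n) ℝ) (φ : ℕ → Fin n → ℝ)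

/-- `Σ_{k ≤ t} (A_t ⋯ A_{k+1}) (c_k φ_k)`, the shape of the sum in the forward view. -/
noncomputable def replaySum (c : ℕ → ℝ) (t : ℕ) : Fin n → ℝ :=
  ∑ k ∈ Finset.range (t + 1), prodDesc n A t (k + 1) *ᵥ (c k • φ k)

lemma replaySum_succ (c : ℕ → ℝ) (t : ℕ) :
    replaySum A φ c (t + 1) = A (t + 1) *ᵥ replaySum A φ c t + c (t + 1) • φ (t + 1) := by
  rw [replaySum, Finset.sum_range_succ, prodDesc_succ_self, one_mulVec, replaySum, mulVec_sum]
  congr 1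
  refine Finset.sum_congr rfl fun k hk => ?_
  rw [prodDesc_succ A (by simp at hk; omega), mulVec_mulVec]

lemma replaySum_congr {c c' : ℕ → ℝ} {t : ℕ} (h : ∀ k ≤ t, c k = c' k) :
    replaySum A φ c t = replaySum A φ c' t :=
  Finset.sum_congr rfl fun k hk => by rw [h k (by simp at hk; omega)]

lemma replaySum_add (c c' : ℕ → ℝ) (t : ℕ) :
    replaySum A φ (c + c') t = replaySum A φ c t + replaySum A φ c' t := by
  simp only [replaySum, Pi.add_apply, add_smul, mulVec_add, Finset.sum_add_distrib]

lemma replaySum_const_mul (r : ℝ) (c : ℕ → ℝ) (t : ℕ) :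
    replaySum A φ (fun k => r * c k) t = r • replaySum A φ c t := by
  simp only [replaySum, mul_smul, mulVec_smul, Finset.smul_sum]

lemma eq_replaySum_of_recurrence (c : ℝ) (a : ℕ → ℝ) (x : ℕ → Fin n → ℝ) (hx0 : x 0 = 0)
    (hx : ∀ t, x (t + 1) = c • (A t *ᵥ x t) + a t • φ t) (t : ℕ) :
    x (t + 1) = replaySum A φ (fun k => c ^ (t - k) * a k) t := by
  induction t with
  | zero => simp [hx, hx0, replaySum, prodDesc_succ_self]
  | succ t ih =>
    have hweights : ∀ k ≤ t, c ^ (t + 1 - k) * a k = c * (c ^ (t - k) * a k) := fun k hk => by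
      rw [show t + 1 - k = t - k + 1 by omega, pow_succ]
      ring
    rw [hx, ih, replaySum_succ, replaySum_congr A φ hweights, replaySum_const_mul, mulVec_smul,
      Nat.sub_self, pow_zero, one_mul]

end replaySum

section lambdaReturn

variable (θ φ : ℕ → Fin n → ℝ) (R : ℕ → ℝ) (γ lam : ℝ)

/-- `δ_t + ⟨θ_t, φ_t⟩ − ⟨θ_{t−1}, φ_t⟩`; at `t = 0` the truncated subtraction gives
`θ_{−1} = θ_0`. -/
noncomputable def replanTDError (t : ℕ) : ℝ :=
  R (t + 1) + γ * (θ t ⬝ᵥ φ (t + 1)) - θ (t - 1) ⬝ᵥ φ t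

lemma iStepReturn_succ (k m : ℕ) :
    iStepReturn n θ φ R γ k (m + 1)
      = iStepReturn n θ φ R γ k m + γ ^ m * replanTDError θ φ R γ (k + m) := by
  rw [iStepReturn, iStepReturn, Finset.sum_Icc_succ_top (by omega), replanTDError,
    Nat.add_sub_cancel, ← add_assoc, show k + m + 1 - 1 = k + m by omega, pow_succ]
  ring

lemma interimLambdaReturn_self (k : ℕ) :
    interimLambdaReturn n θ φ R γ lam k k = θ (k - 1) ⬝ᵥ φ k := by
  simp [interimLambdaReturn, iStepReturn]

lemma interimLambdaReturn_succ {k t : ℕ} (hk : k ≤ t) :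
    interimLambdaReturn n θ φ R γ lam k (t + 1)
      = interimLambdaReturn n θ φ R γ lam k t
        + (γ * lam) ^ (t - k) * replanTDError θ φ R γ t := by
  obtain ⟨m, rfl⟩ := Nat.exists_eq_add_of_le hk
  simp only [interimLambdaReturn, show k + m + 1 - k = m + 1 by omega,
    show k + m - k = m by omega, iStepReturn_succ]
  cases m with
  | zero => simp
  | succ m =>
    simp only [Nat.add_sub_cancel, Finset.sum_Icc_succ_top (show 1 ≤ m + 1 by omega)]
    ring

end lambdaReturn

lemma ebar_eq_replaySum (φ : ℕ → Fin n → ℝ) (α : ℕ → ℝ) (R : ℕ → ℝ) (γ lam : ℝ)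
    (θ : ℕ → Fin n → ℝ) (A : ℕ → Matrix (Fin n) (Fin n) ℝ) (e ebar : ℕ → Fin n → ℝ)
    (he0 : e 0 = 0) (hebar0 : ebar 0 = 0)
    (he : ∀ t, e (t + 1) = (γ * lam) • (A t *ᵥ e t) + α t • φ t)
    (hebar : ∀ t, ebar (t + 1) = A t *ᵥ ebar t
      + replanTDError θ φ R γ t • e (t + 1) + (α t * (θ (t - 1) ⬝ᵥ φ t)) • φ t) (t : ℕ) :
    ebar (t + 1)
      = replaySum A φ (fun k => α k * interimLambdaReturn n θ φ R γ lam k (t + 1)) t := by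
  induction t with
  | zero =>
    rw [hebar, hebar0, he, he0, replaySum, Finset.sum_range_one, prodDesc_succ_self, one_mulVec,
      interimLambdaReturn_succ θ φ R γ lam le_rfl, interimLambdaReturn_self]
    simp only [mulVec_zero, smul_zero, zero_add, Nat.sub_self, pow_zero, one_mul]
    module
  | succ t ih =>
    have hweights : ∀ k ≤ t + 1,
        α k * interimLambdaReturn n θ φ R γ lam k (t + 2)
          = ((fun k => α k * interimLambdaReturn n θ φ R γ lam k (t + 1))
            + fun k => replanTDError θ φ R γ (t + 1) * ((γ * lam) ^ (t + 1 - k) * α k)) k :=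
      fun k hk => by
        rw [Pi.add_apply, interimLambdaReturn_succ θ φ R γ lam hk]
        ring
    rw [replaySum_congr A φ hweights, replaySum_add, replaySum_const_mul, replaySum_succ, ← ih,
      ← eq_replaySum_of_recurrence A φ _ α e he0 he, interimLambdaReturn_self, hebar,
      Nat.add_sub_cancel]
    abel

theorem trueOnlineTDReplan_incremental_general (n : ℕ) (φ : ℕ → (Fin n → ℝ)) (α : ℕ → ℝ)
    (R : ℕ → ℝ) (γ lam : ℝ) (θ : ℕ → (Fin n → ℝ))
    (A : ℕ → Matrix (Fin n) (Fin n) ℝ)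
    (hforward : ∀ t, θ (t + 1) =
      (prodDesc n A t 0) *ᵥ θ t +
        ∑ k ∈ Finset.range (t + 1),
          (prodDesc n A t (k + 1)) *ᵥ
            ((α k * interimLambdaReturn n θ φ R γ lam k (t + 1)) • φ k))
    (e ebar : ℕ → (Fin n → ℝ)) (Abar : ℕ → Matrix (Fin n) (Fin n) ℝ)
    (he0 : e 0 = 0) (hebar0 : ebar 0 = 0) (hAbar0 : Abar 0 = 1)
    (he : ∀ t, e (t + 1) = (γ * lam) • ((A t) *ᵥ e t) + α t • φ t)
    (hebar : ∀ t, ebar (t + 1) =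
      (A t) *ᵥ ebar t
        + (((R (t + 1) + γ * (θ t ⬝ᵥ φ (t + 1)) - (θ t ⬝ᵥ φ t)))
            + (θ t ⬝ᵥ φ t) - (θ (t - 1) ⬝ᵥ φ t)) • e (t + 1)
        + (α t * (θ (t - 1) ⬝ᵥ φ t)) • φ t)
    (hAbar : ∀ t, Abar (t + 1) = A t * Abar t) :
    ∀ t, θ (t + 1) = (Abar (t + 1)) *ᵥ θ t + ebar (t + 1) := by
  have hebar' : ∀ t, ebar (t + 1) = A t *ᵥ ebar t
      + replanTDError θ φ R γ t • e (t + 1) + (α t * (θ (t - 1) ⬝ᵥ φ t)) • φ t := fun t => by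
    rw [hebar, replanTDError, sub_add_cancel]
  intro t
  rw [hforward, eq_prodDesc_zero_of_succ A Abar hAbar0 hAbar,
    ebar_eq_replaySum φ α R γ lam θ A e ebar he0 hebar0 he hebar', replaySum]

/-- **Theorem 1** (equivalence of the forward and incremental true online TD(λ)-Replan).
If `θ` satisfies the forward-view replay closed form
`θ_{t+1} = (A_t ⋯ A_0) θ_t + Σ_{k=0}^{t} (A_t ⋯ A_{k+1}) (α_k φ_k G_k^{λ|t+1})`
with `A_i = I − α_i φ_i φ_iᵀ`, and the sequences `e, ē, Ā` are defined incrementally by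
`e_{−1} = 0`, `ē_{−1} = 0`, `Ā_{−1} = I` and, for `t ≥ 0`,
`e_t = γλ A_t e_{t−1} + α_t φ_t`,
`ē_t = A_t ē_{t−1} + (δ_t + ⟨θ_t,φ_t⟩ − ⟨θ_{t−1},φ_t⟩) e_t + α_t ⟨θ_{t−1},φ_t⟩ φ_t`
(with `δ_t = R_{t+1} + γ⟨θ_t,φ_{t+1}⟩ − ⟨θ_t,φ_t⟩` and `θ_{−1} = θ_0`), and
`Ā_t = A_t Ā_{t−1}`, then `θ_{t+1} = Ā_t θ_t + ē_t` for every `t`.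
Here index `u + 1` of `e`, `ebar`, `Abar` corresponds to subscript `u` (so index `0`
corresponds to subscript `−1`), and natural subtraction makes `θ (0 - 1) = θ 0 = θ_{−1}`. -/
theorem trueOnlineTDReplan_incremental (n : ℕ) (φ : ℕ → (Fin n → ℝ)) (α : ℕ → ℝ)
    (R : ℕ → ℝ) (γ lam : ℝ) (θ : ℕ → (Fin n → ℝ))
    (A : ℕ → Matrix (Fin n) (Fin n) ℝ)
    (hA : ∀ i, A i = 1 - α i • vecMulVec (φ i) (φ i))
    (hforward : ∀ t, θ (t + 1) =
      (prodDesc n A t 0) *ᵥ θ t +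
        ∑ k ∈ Finset.range (t + 1),
          (prodDesc n A t (k + 1)) *ᵥ
            ((α k * interimLambdaReturn n θ φ R γ lam k (t + 1)) • φ k))
    (e ebar : ℕ → (Fin n → ℝ)) (Abar : ℕ → Matrix (Fin n) (Fin n) ℝ)
    (he0 : e 0 = 0) (hebar0 : ebar 0 = 0) (hAbar0 : Abar 0 = 1)
    (he : ∀ t, e (t + 1) = (γ * lam) • ((A t) *ᵥ e t) + α t • φ t)
    (hebar : ∀ t, ebar (t + 1) =
      (A t) *ᵥ ebar t
        + (((R (t + 1) + γ * (θ t ⬝ᵥ φ (t + 1)) - (θ t ⬝ᵥ φ t)))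
            + (θ t ⬝ᵥ φ t) - (θ (t - 1) ⬝ᵥ φ t)) • e (t + 1)
        + (α t * (θ (t - 1) ⬝ᵥ φ t)) • φ t)
    (hAbar : ∀ t, Abar (t + 1) = A t * Abar t) :
    ∀ t, θ (t + 1) = (Abar (t + 1)) *ᵥ θ t + ebar (t + 1) :=
  trueOnlineTDReplan_incremental_general n φ α R γ lam θ A hforward e ebar Abar he0 hebar0 hAbar0 he
    hebar hAbar
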